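/- For every (z,w) ∈ ℂ² with (Im z)² + (Im w)² > 0, the evaluation of the 5×5 determinant det A₃ at (z, w, conj z, conj w) is nonzero. (By the Ebenfelt–Zaitsev characterization of umbilical points, this says precisely that for every ε > 0 the hypersurface M̃_ε := {(z,w) ∈ ℂ² : (Im z)² + (Im w)² = ε²} has no umbilical points.) -/
import Mathlib


open MvPolynomial

/-- The polarization ρ̂ = −((z−ζ)² + (w−ω)²)/4 of (Im z)² + (Im w)² in ℂ[z,w,ζ,ω],
with variables z = X 0, w = X 1, ζ = X 2, ω = X 3. -/
noncomputable def rhoHat : MvPolynomial (Fin 4) ℂ :=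
  C (-(1 / 4 : ℂ)) * ((X 0 - X 2) ^ 2 + (X 1 - X 3) ^ 2)

/-- ρ̂_z = ∂ρ̂/∂z. -/
noncomputable def rhoZ : MvPolynomial (Fin 4) ℂ := pderiv 0 rhoHat

/-- ρ̂_w = ∂ρ̂/∂w. -/
noncomputable def rhoW : MvPolynomial (Fin 4) ℂ := pderiv 1 rhoHat

/-- ρ̂_ζ = ∂ρ̂/∂ζ. -/
noncomputable def rhoZeta : MvPolynomial (Fin 4) ℂ := pderiv 2 rhoHat

/-- ρ̂_ω = ∂ρ̂/∂ω. -/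
noncomputable def rhoOmega : MvPolynomial (Fin 4) ℂ := pderiv 3 rhoHat

/-- The derivation L̄(f) = −ρ̂_ω·∂f/∂ζ + ρ̂_ζ·∂f/∂ω. -/
noncomputable def Lbar (f : MvPolynomial (Fin 4) ℂ) : MvPolynomial (Fin 4) ℂ :=
  -rhoOmega * pderiv 2 f + rhoZeta * pderiv 3 f

/-- The row-generating functions g₁ = ρ̂_w³, g₂ = ρ̂_z·ρ̂_w², g₃ = ρ̂_z²·ρ̂_w, g₄ = ρ̂_z³,
g₅ = ρ̂/2. -/
noncomputable def gRow : Fin 5 → MvPolynomial (Fin 4) ℂ :=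
  ![rhoW ^ 3, rhoZ * rhoW ^ 2, rhoZ ^ 2 * rhoW, rhoZ ^ 3, C (1 / 2 : ℂ) * rhoHat]

/-- The 5×5 matrix A₃ with i-th row (gᵢ, L̄(gᵢ), L̄²(gᵢ), L̄³(gᵢ), L̄⁴(gᵢ)). -/
noncomputable def matA3 : Matrix (Fin 5) (Fin 5) (MvPolynomial (Fin 4) ℂ) :=
  Matrix.of fun i j => Lbar^[(j : ℕ)] (gRow i)

/-! Auxiliary development. -/

/-- The constant 1/2 as a polynomial. -/
noncomputable def Hc : MvPolynomial (Fin 4) ℂ := C (2⁻¹ : ℂ)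

lemma two_C_half : (2 : MvPolynomial (Fin 4) ℂ) * C (2⁻¹ : ℂ) = 1 := by
  rw [← map_ofNat (C : ℂ →+* MvPolynomial (Fin 4) ℂ) 2, ← C_mul, ← C_1]
  norm_num

lemma hC4 : (C (-(1 / 4 : ℂ)) : MvPolynomial (Fin 4) ℂ) = -(C (2⁻¹ : ℂ) * C (2⁻¹ : ℂ)) := by
  rw [← C_mul, ← C_neg]; norm_num

lemma C_half_eq : (C (1 / 2 : ℂ) : MvPolynomial (Fin 4) ℂ) = Hc := by
  rw [Hc]; norm_num

lemma hZ : rhoZ = -(Hc * (X 0 - X 2)) := by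
  rw [rhoZ, rhoHat, Hc, hC4]
  simp [pderiv_C_mul, pderiv_pow, pderiv_X, Pi.single_apply]
  linear_combination (C (2⁻¹ : ℂ) * (X 0 - X 2 : MvPolynomial (Fin 4) ℂ)) * two_C_half

lemma hW : rhoW = -(Hc * (X 1 - X 3)) := by
  rw [rhoW, rhoHat, Hc, hC4]
  simp [pderiv_C_mul, pderiv_pow, pderiv_X, Pi.single_apply]
  linear_combination (C (2⁻¹ : ℂ) * (X 1 - X 3 : MvPolynomial (Fin 4) ℂ)) * two_C_half

lemma hZeta : rhoZeta = Hc * (X 0 - X 2) := by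
  rw [rhoZeta, rhoHat, Hc, hC4]
  simp [pderiv_C_mul, pderiv_pow, pderiv_X, Pi.single_apply]
  linear_combination (C (2⁻¹ : ℂ) * (X 0 - X 2 : MvPolynomial (Fin 4) ℂ)) * two_C_half

lemma hOmega : rhoOmega = Hc * (X 1 - X 3) := by
  rw [rhoOmega, rhoHat, Hc, hC4]
  simp [pderiv_C_mul, pderiv_pow, pderiv_X, Pi.single_apply]
  linear_combination (C (2⁻¹ : ℂ) * (X 1 - X 3 : MvPolynomial (Fin 4) ℂ)) * two_C_half

lemma hRho : rhoHat = -(rhoZ ^ 2 + rhoW ^ 2) := by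
  rw [hZ, hW, rhoHat, hC4]
  rw [show (C (2⁻¹:ℂ) : MvPolynomial (Fin 4) ℂ) = Hc from rfl]
  ring

lemma pZ2 : pderiv 2 rhoZ = Hc := by
  rw [hZ, Hc]
  simp [pderiv_C_mul, pderiv_X, Pi.single_apply]

lemma pZ3 : pderiv 3 rhoZ = 0 := by
  rw [hZ, Hc]
  simp [pderiv_C_mul, pderiv_X, Pi.single_apply]

lemma pW2 : pderiv 2 rhoW = 0 := by
  rw [hW, Hc]
  simp [pderiv_C_mul, pderiv_X, Pi.single_apply]

lemma pW3 : pderiv 3 rhoW = Hc := by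
  rw [hW, Hc]
  simp [pderiv_C_mul, pderiv_X, Pi.single_apply]

/-! Structural properties of `Lbar`. -/

lemma Lbar_add (f g : MvPolynomial (Fin 4) ℂ) : Lbar (f + g) = Lbar f + Lbar g := by
  simp only [Lbar, map_add]; ring

lemma Lbar_sub (f g : MvPolynomial (Fin 4) ℂ) : Lbar (f - g) = Lbar f - Lbar g := by
  simp only [Lbar, map_sub]; ring

lemma Lbar_neg (f : MvPolynomial (Fin 4) ℂ) : Lbar (-f) = -Lbar f := by
  simp only [Lbar, map_neg]; ring

lemma Lbar_mul (f g : MvPolynomial (Fin 4) ℂ) : Lbar (f * g) = Lbar f * g + f * Lbar g := by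
  simp only [Lbar, pderiv_mul]; ring

lemma Lbar_pow (f : MvPolynomial (Fin 4) ℂ) (n : ℕ) :
    Lbar (f ^ n) = n * f ^ (n - 1) * Lbar f := by
  simp only [Lbar, pderiv_pow]; ring

lemma Lbar_zero : Lbar (0 : MvPolynomial (Fin 4) ℂ) = 0 := by
  simp [Lbar]

lemma Lbar_Hc : Lbar Hc = 0 := by
  simp [Lbar, Hc, pderiv_C]

lemma Lbar_ofNat (n : ℕ) [n.AtLeastTwo] :
    Lbar (no_index (OfNat.ofNat n) : MvPolynomial (Fin 4) ℂ) = 0 := by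
  rw [show (OfNat.ofNat n : MvPolynomial (Fin 4) ℂ) = C (OfNat.ofNat n : ℂ) by
    rw [map_ofNat]]
  simp [Lbar, pderiv_C]

lemma Lbar_u : Lbar rhoZ = Hc * rhoW := by
  rw [Lbar, pZ2, pZ3, hOmega, hW]; ring

lemma Lbar_v : Lbar rhoW = -(Hc * rhoZ) := by
  rw [Lbar, pW2, pW3, hZeta, hZ]; ring

/-! The entries of the matrix, computed successively. -/

lemma L01 : Lbar (rhoW ^ 3) = -(3 * Hc * (rhoZ * rhoW ^ 2)) := by
  rw [Lbar_pow, Lbar_v]; ring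

lemma L02 : Lbar (-(3 * Hc * (rhoZ * rhoW ^ 2))) =
    Hc ^ 2 * (6 * rhoZ ^ 2 * rhoW - 3 * rhoW ^ 3) := by
  simp only [Lbar_neg, Lbar_mul, Lbar_pow, Lbar_u, Lbar_v, Lbar_Hc, Lbar_ofNat]; ring

lemma L03 : Lbar (Hc ^ 2 * (6 * rhoZ ^ 2 * rhoW - 3 * rhoW ^ 3)) =
    Hc ^ 3 * (21 * (rhoZ * rhoW ^ 2) - 6 * rhoZ ^ 3) := by
  simp only [Lbar_sub, Lbar_mul, Lbar_pow, Lbar_u, Lbar_v, Lbar_Hc, Lbar_ofNat]; ring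

lemma L04 : Lbar (Hc ^ 3 * (21 * (rhoZ * rhoW ^ 2) - 6 * rhoZ ^ 3)) =
    Hc ^ 4 * (21 * rhoW ^ 3 - 60 * (rhoZ ^ 2 * rhoW)) := by
  simp only [Lbar_sub, Lbar_mul, Lbar_pow, Lbar_u, Lbar_v, Lbar_Hc, Lbar_ofNat]; ring

lemma L11 : Lbar (rhoZ * rhoW ^ 2) = Hc * (rhoW ^ 3 - 2 * (rhoZ ^ 2 * rhoW)) := by
  simp only [Lbar_mul, Lbar_pow, Lbar_u, Lbar_v]; ring

lemma L12 : Lbar (Hc * (rhoW ^ 3 - 2 * (rhoZ ^ 2 * rhoW))) =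
    Hc ^ 2 * (2 * rhoZ ^ 3 - 7 * (rhoZ * rhoW ^ 2)) := by
  simp only [Lbar_sub, Lbar_mul, Lbar_pow, Lbar_u, Lbar_v, Lbar_Hc, Lbar_ofNat]; ring

lemma L13 : Lbar (Hc ^ 2 * (2 * rhoZ ^ 3 - 7 * (rhoZ * rhoW ^ 2))) =
    Hc ^ 3 * (20 * (rhoZ ^ 2 * rhoW) - 7 * rhoW ^ 3) := by
  simp only [Lbar_sub, Lbar_mul, Lbar_pow, Lbar_u, Lbar_v, Lbar_Hc, Lbar_ofNat]; ring

lemma L14 : Lbar (Hc ^ 3 * (20 * (rhoZ ^ 2 * rhoW) - 7 * rhoW ^ 3)) =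
    Hc ^ 4 * (61 * (rhoZ * rhoW ^ 2) - 20 * rhoZ ^ 3) := by
  simp only [Lbar_sub, Lbar_mul, Lbar_pow, Lbar_u, Lbar_v, Lbar_Hc, Lbar_ofNat]; ring

lemma L21 : Lbar (rhoZ ^ 2 * rhoW) = Hc * (2 * (rhoZ * rhoW ^ 2) - rhoZ ^ 3) := by
  simp only [Lbar_mul, Lbar_pow, Lbar_u, Lbar_v]; ring

lemma L22 : Lbar (Hc * (2 * (rhoZ * rhoW ^ 2) - rhoZ ^ 3)) =
    Hc ^ 2 * (2 * rhoW ^ 3 - 7 * (rhoZ ^ 2 * rhoW)) := by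
  simp only [Lbar_sub, Lbar_mul, Lbar_pow, Lbar_u, Lbar_v, Lbar_Hc, Lbar_ofNat]; ring

lemma L23 : Lbar (Hc ^ 2 * (2 * rhoW ^ 3 - 7 * (rhoZ ^ 2 * rhoW))) =
    Hc ^ 3 * (7 * rhoZ ^ 3 - 20 * (rhoZ * rhoW ^ 2)) := by
  simp only [Lbar_sub, Lbar_mul, Lbar_pow, Lbar_u, Lbar_v, Lbar_Hc, Lbar_ofNat]; ring

lemma L24 : Lbar (Hc ^ 3 * (7 * rhoZ ^ 3 - 20 * (rhoZ * rhoW ^ 2))) =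
    Hc ^ 4 * (61 * (rhoZ ^ 2 * rhoW) - 20 * rhoW ^ 3) := by
  simp only [Lbar_sub, Lbar_mul, Lbar_pow, Lbar_u, Lbar_v, Lbar_Hc, Lbar_ofNat]; ring

lemma L31 : Lbar (rhoZ ^ 3) = 3 * Hc * (rhoZ ^ 2 * rhoW) := by
  rw [Lbar_pow, Lbar_u]; ring

lemma L32 : Lbar (3 * Hc * (rhoZ ^ 2 * rhoW)) =
    Hc ^ 2 * (6 * (rhoZ * rhoW ^ 2) - 3 * rhoZ ^ 3) := by
  simp only [Lbar_mul, Lbar_pow, Lbar_u, Lbar_v, Lbar_Hc, Lbar_ofNat]; ring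

lemma L33 : Lbar (Hc ^ 2 * (6 * (rhoZ * rhoW ^ 2) - 3 * rhoZ ^ 3)) =
    Hc ^ 3 * (6 * rhoW ^ 3 - 21 * (rhoZ ^ 2 * rhoW)) := by
  simp only [Lbar_sub, Lbar_mul, Lbar_pow, Lbar_u, Lbar_v, Lbar_Hc, Lbar_ofNat]; ring

lemma L34 : Lbar (Hc ^ 3 * (6 * rhoW ^ 3 - 21 * (rhoZ ^ 2 * rhoW))) =
    Hc ^ 4 * (21 * rhoZ ^ 3 - 60 * (rhoZ * rhoW ^ 2)) := by
  simp only [Lbar_sub, Lbar_mul, Lbar_pow, Lbar_u, Lbar_v, Lbar_Hc, Lbar_ofNat]; ring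

lemma L41 : Lbar (C (1 / 2 : ℂ) * rhoHat) = 0 := by
  rw [C_half_eq, hRho]
  simp only [Lbar_mul, Lbar_neg, Lbar_add, Lbar_pow, Lbar_u, Lbar_v, Lbar_Hc]
  ring

lemma fsucc3_0 : ((0 : Fin 3)).succ = 1 := by decide
lemma fsucc3_1 : ((1 : Fin 3)).succ = 2 := by decide
lemma fsucc3_2 : ((2 : Fin 3)).succ = 3 := by decide
lemma fsucc4_0 : ((0 : Fin 4)).succ = 1 := by decide
lemma fsucc4_1 : ((1 : Fin 4)).succ = 2 := by decide
lemma fsucc4_2 : ((2 : Fin 4)).succ = 3 := by decide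
lemma fsucc4_3 : ((3 : Fin 4)).succ = 4 := by decide
lemma fsa4_0_0 : ((0 : Fin 4)).succAbove (0 : Fin 3) = 1 := by decide
lemma fsa4_0_1 : ((0 : Fin 4)).succAbove (1 : Fin 3) = 2 := by decide
lemma fsa4_0_2 : ((0 : Fin 4)).succAbove (2 : Fin 3) = 3 := by decide
lemma fsa4_1_0 : ((1 : Fin 4)).succAbove (0 : Fin 3) = 0 := by decide
lemma fsa4_1_1 : ((1 : Fin 4)).succAbove (1 : Fin 3) = 2 := by decide
lemma fsa4_1_2 : ((1 : Fin 4)).succAbove (2 : Fin 3) = 3 := by decide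
lemma fsa4_2_0 : ((2 : Fin 4)).succAbove (0 : Fin 3) = 0 := by decide
lemma fsa4_2_1 : ((2 : Fin 4)).succAbove (1 : Fin 3) = 1 := by decide
lemma fsa4_2_2 : ((2 : Fin 4)).succAbove (2 : Fin 3) = 3 := by decide
lemma fsa4_3_0 : ((3 : Fin 4)).succAbove (0 : Fin 3) = 0 := by decide
lemma fsa4_3_1 : ((3 : Fin 4)).succAbove (1 : Fin 3) = 1 := by decide
lemma fsa4_3_2 : ((3 : Fin 4)).succAbove (2 : Fin 3) = 2 := by decide
lemma fsa5_0_0 : ((0 : Fin 5)).succAbove (0 : Fin 4) = 1 := by decide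
lemma fsa5_0_1 : ((0 : Fin 5)).succAbove (1 : Fin 4) = 2 := by decide
lemma fsa5_0_2 : ((0 : Fin 5)).succAbove (2 : Fin 4) = 3 := by decide
lemma fsa5_0_3 : ((0 : Fin 5)).succAbove (3 : Fin 4) = 4 := by decide
lemma fsa5_1_0 : ((1 : Fin 5)).succAbove (0 : Fin 4) = 0 := by decide
lemma fsa5_1_1 : ((1 : Fin 5)).succAbove (1 : Fin 4) = 2 := by decide
lemma fsa5_1_2 : ((1 : Fin 5)).succAbove (2 : Fin 4) = 3 := by decide
lemma fsa5_1_3 : ((1 : Fin 5)).succAbove (3 : Fin 4) = 4 := by decide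
lemma fsa5_2_0 : ((2 : Fin 5)).succAbove (0 : Fin 4) = 0 := by decide
lemma fsa5_2_1 : ((2 : Fin 5)).succAbove (1 : Fin 4) = 1 := by decide
lemma fsa5_2_2 : ((2 : Fin 5)).succAbove (2 : Fin 4) = 3 := by decide
lemma fsa5_2_3 : ((2 : Fin 5)).succAbove (3 : Fin 4) = 4 := by decide
lemma fsa5_3_0 : ((3 : Fin 5)).succAbove (0 : Fin 4) = 0 := by decide
lemma fsa5_3_1 : ((3 : Fin 5)).succAbove (1 : Fin 4) = 1 := by decide
lemma fsa5_3_2 : ((3 : Fin 5)).succAbove (2 : Fin 4) = 2 := by decide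
lemma fsa5_3_3 : ((3 : Fin 5)).succAbove (3 : Fin 4) = 4 := by decide
lemma fsa5_4_0 : ((4 : Fin 5)).succAbove (0 : Fin 4) = 0 := by decide
lemma fsa5_4_1 : ((4 : Fin 5)).succAbove (1 : Fin 4) = 1 := by decide
lemma fsa5_4_2 : ((4 : Fin 5)).succAbove (2 : Fin 4) = 2 := by decide
lemma fsa5_4_3 : ((4 : Fin 5)).succAbove (3 : Fin 4) = 3 := by decide
lemma fv4_0 : (((0 : Fin 4)) : ℕ) = 0 := rfl
lemma fv4_1 : (((1 : Fin 4)) : ℕ) = 1 := rfl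
lemma fv4_2 : (((2 : Fin 4)) : ℕ) = 2 := rfl
lemma fv4_3 : (((3 : Fin 4)) : ℕ) = 3 := rfl
lemma fv5_0 : (((0 : Fin 5)) : ℕ) = 0 := rfl
lemma fv5_1 : (((1 : Fin 5)) : ℕ) = 1 := rfl
lemma fv5_2 : (((2 : Fin 5)) : ℕ) = 2 := rfl
lemma fv5_3 : (((3 : Fin 5)) : ℕ) = 3 := rfl
lemma fv5_4 : (((4 : Fin 5)) : ℕ) = 4 := rfl

lemma det_fin_four' {R : Type*} [CommRing R] (M : Matrix (Fin 4) (Fin 4) R) :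
    M.det =
      M 0 0*M 1 1*M 2 2*M 3 3 - M 0 0*M 1 1*M 2 3*M 3 2 - M 0 0*M 1 2*M 2 1*M 3 3 + M 0 0*M 1
      2*M 2 3*M 3 1 + M 0 0*M 1 3*M 2 1*M 3 2 - M 0 0*M 1 3*M 2 2*M 3 1 - M 0 1*M 1 0*M 2 2*M 3
      3 + M 0 1*M 1 0*M 2 3*M 3 2 + M 0 1*M 1 2*M 2 0*M 3 3 - M 0 1*M 1 2*M 2 3*M 3 0 - M 0 1*M
      1 3*M 2 0*M 3 2 + M 0 1*M 1 3*M 2 2*M 3 0 + M 0 2*M 1 0*M 2 1*M 3 3 - M 0 2*M 1 0*M 2 3*M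
      3 1 - M 0 2*M 1 1*M 2 0*M 3 3 + M 0 2*M 1 1*M 2 3*M 3 0 + M 0 2*M 1 3*M 2 0*M 3 1 - M 0
      2*M 1 3*M 2 1*M 3 0 - M 0 3*M 1 0*M 2 1*M 3 2 + M 0 3*M 1 0*M 2 2*M 3 1 + M 0 3*M 1 1*M 2
      0*M 3 2 - M 0 3*M 1 1*M 2 2*M 3 0 - M 0 3*M 1 2*M 2 0*M 3 1 + M 0 3*M 1 2*M 2 1*M 3 0 := by
  rw [Matrix.det_succ_row_zero]
  simp only [Fin.sum_univ_four, Matrix.submatrix_apply, Matrix.det_fin_three, fsucc3_0, fsucc3_1, fsucc3_2, fsucc4_0, fsucc4_1, fsucc4_2, fsucc4_3, fsa4_0_0, fsa4_0_1, fsa4_0_2, fsa4_1_0, fsa4_1_1, fsa4_1_2, fsa4_2_0, fsa4_2_1, fsa4_2_2, fsa4_3_0, fsa4_3_1, fsa4_3_2, fsa5_0_0, fsa5_0_1, fsa5_0_2, fsa5_0_3, fsa5_1_0, fsa5_1_1, fsa5_1_2, fsa5_1_3, fsa5_2_0, fsa5_2_1, fsa5_2_2, fsa5_2_3, fsa5_3_0,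 fsa5_3_1, fsa5_3_2, fsa5_3_3, fsa5_4_0, fsa5_4_1, fsa5_4_2, fsa5_4_3, fv4_0, fv4_1, fv4_2, fv4_3, fv5_0, fv5_1, fv5_2, fv5_3, fv5_4]
  ring

set_option maxHeartbeats 1000000 in
lemma det_fin_five' {R : Type*} [CommRing R] (M : Matrix (Fin 5) (Fin 5) R) :
    M.det =
      M 0 0*M 1 1*M 2 2*M 3 3*M 4 4 - M 0 0*M 1 1*M 2 2*M 3 4*M 4 3 - M 0 0*M 1 1*M 2 3*M 3 2*M
      4 4 + M 0 0*M 1 1*M 2 3*M 3 4*M 4 2 + M 0 0*M 1 1*M 2 4*M 3 2*M 4 3 - M 0 0*M 1 1*M 2 4*M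
      3 3*M 4 2 - M 0 0*M 1 2*M 2 1*M 3 3*M 4 4 + M 0 0*M 1 2*M 2 1*M 3 4*M 4 3 + M 0 0*M 1 2*M
      2 3*M 3 1*M 4 4 - M 0 0*M 1 2*M 2 3*M 3 4*M 4 1 - M 0 0*M 1 2*M 2 4*M 3 1*M 4 3 + M 0 0*M
      1 2*M 2 4*M 3 3*M 4 1 + M 0 0*M 1 3*M 2 1*M 3 2*M 4 4 - M 0 0*M 1 3*M 2 1*M 3 4*M 4 2 - M
      0 0*M 1 3*M 2 2*M 3 1*M 4 4 + M 0 0*M 1 3*M 2 2*M 3 4*M 4 1 + M 0 0*M 1 3*M 2 4*M 3 1*M 4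
      2 - M 0 0*M 1 3*M 2 4*M 3 2*M 4 1 - M 0 0*M 1 4*M 2 1*M 3 2*M 4 3 + M 0 0*M 1 4*M 2 1*M 3
      3*M 4 2 + M 0 0*M 1 4*M 2 2*M 3 1*M 4 3 - M 0 0*M 1 4*M 2 2*M 3 3*M 4 1 - M 0 0*M 1 4*M 2
      3*M 3 1*M 4 2 + M 0 0*M 1 4*M 2 3*M 3 2*M 4 1 - M 0 1*M 1 0*M 2 2*M 3 3*M 4 4 + M 0 1*M 1
      0*M 2 2*M 3 4*M 4 3 + M 0 1*M 1 0*M 2 3*M 3 2*M 4 4 - M 0 1*M 1 0*M 2 3*M 3 4*M 4 2 - M 0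
      1*M 1 0*M 2 4*M 3 2*M 4 3 + M 0 1*M 1 0*M 2 4*M 3 3*M 4 2 + M 0 1*M 1 2*M 2 0*M 3 3*M 4 4
      - M 0 1*M 1 2*M 2 0*M 3 4*M 4 3 - M 0 1*M 1 2*M 2 3*M 3 0*M 4 4 + M 0 1*M 1 2*M 2 3*M 3
      4*M 4 0 + M 0 1*M 1 2*M 2 4*M 3 0*M 4 3 - M 0 1*M 1 2*M 2 4*M 3 3*M 4 0 - M 0 1*M 1 3*M 2
      0*M 3 2*M 4 4 + M 0 1*M 1 3*M 2 0*M 3 4*M 4 2 + M 0 1*M 1 3*M 2 2*M 3 0*M 4 4 - M 0 1*M 1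
      3*M 2 2*M 3 4*M 4 0 - M 0 1*M 1 3*M 2 4*M 3 0*M 4 2 + M 0 1*M 1 3*M 2 4*M 3 2*M 4 0 + M 0
      1*M 1 4*M 2 0*M 3 2*M 4 3 - M 0 1*M 1 4*M 2 0*M 3 3*M 4 2 - M 0 1*M 1 4*M 2 2*M 3 0*M 4 3
      + M 0 1*M 1 4*M 2 2*M 3 3*M 4 0 + M 0 1*M 1 4*M 2 3*M 3 0*M 4 2 - M 0 1*M 1 4*M 2 3*M 3
      2*M 4 0 + M 0 2*M 1 0*M 2 1*M 3 3*M 4 4 - M 0 2*M 1 0*M 2 1*M 3 4*M 4 3 - M 0 2*M 1 0*M 2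
      3*M 3 1*M 4 4 + M 0 2*M 1 0*M 2 3*M 3 4*M 4 1 + M 0 2*M 1 0*M 2 4*M 3 1*M 4 3 - M 0 2*M 1
      0*M 2 4*M 3 3*M 4 1 - M 0 2*M 1 1*M 2 0*M 3 3*M 4 4 + M 0 2*M 1 1*M 2 0*M 3 4*M 4 3 + M 0
      2*M 1 1*M 2 3*M 3 0*M 4 4 - M 0 2*M 1 1*M 2 3*M 3 4*M 4 0 - M 0 2*M 1 1*M 2 4*M 3 0*M 4 3
      + M 0 2*M 1 1*M 2 4*M 3 3*M 4 0 + M 0 2*M 1 3*M 2 0*M 3 1*M 4 4 - M 0 2*M 1 3*M 2 0*M 3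
      4*M 4 1 - M 0 2*M 1 3*M 2 1*M 3 0*M 4 4 + M 0 2*M 1 3*M 2 1*M 3 4*M 4 0 + M 0 2*M 1 3*M 2
      4*M 3 0*M 4 1 - M 0 2*M 1 3*M 2 4*M 3 1*M 4 0 - M 0 2*M 1 4*M 2 0*M 3 1*M 4 3 + M 0 2*M 1
      4*M 2 0*M 3 3*M 4 1 + M 0 2*M 1 4*M 2 1*M 3 0*M 4 3 - M 0 2*M 1 4*M 2 1*M 3 3*M 4 0 - M 0
      2*M 1 4*M 2 3*M 3 0*M 4 1 + M 0 2*M 1 4*M 2 3*M 3 1*M 4 0 - M 0 3*M 1 0*M 2 1*M 3 2*M 4 4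
      + M 0 3*M 1 0*M 2 1*M 3 4*M 4 2 + M 0 3*M 1 0*M 2 2*M 3 1*M 4 4 - M 0 3*M 1 0*M 2 2*M 3
      4*M 4 1 - M 0 3*M 1 0*M 2 4*M 3 1*M 4 2 + M 0 3*M 1 0*M 2 4*M 3 2*M 4 1 + M 0 3*M 1 1*M 2
      0*M 3 2*M 4 4 - M 0 3*M 1 1*M 2 0*M 3 4*M 4 2 - M 0 3*M 1 1*M 2 2*M 3 0*M 4 4 + M 0 3*M 1
      1*M 2 2*M 3 4*M 4 0 + M 0 3*M 1 1*M 2 4*M 3 0*M 4 2 - M 0 3*M 1 1*M 2 4*M 3 2*M 4 0 - M 0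
      3*M 1 2*M 2 0*M 3 1*M 4 4 + M 0 3*M 1 2*M 2 0*M 3 4*M 4 1 + M 0 3*M 1 2*M 2 1*M 3 0*M 4 4
      - M 0 3*M 1 2*M 2 1*M 3 4*M 4 0 - M 0 3*M 1 2*M 2 4*M 3 0*M 4 1 + M 0 3*M 1 2*M 2 4*M 3
      1*M 4 0 + M 0 3*M 1 4*M 2 0*M 3 1*M 4 2 - M 0 3*M 1 4*M 2 0*M 3 2*M 4 1 - M 0 3*M 1 4*M 2
      1*M 3 0*M 4 2 + M 0 3*M 1 4*M 2 1*M 3 2*M 4 0 + M 0 3*M 1 4*M 2 2*M 3 0*M 4 1 - M 0 3*M 1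
      4*M 2 2*M 3 1*M 4 0 + M 0 4*M 1 0*M 2 1*M 3 2*M 4 3 - M 0 4*M 1 0*M 2 1*M 3 3*M 4 2 - M 0
      4*M 1 0*M 2 2*M 3 1*M 4 3 + M 0 4*M 1 0*M 2 2*M 3 3*M 4 1 + M 0 4*M 1 0*M 2 3*M 3 1*M 4 2
      - M 0 4*M 1 0*M 2 3*M 3 2*M 4 1 - M 0 4*M 1 1*M 2 0*M 3 2*M 4 3 + M 0 4*M 1 1*M 2 0*M 3
      3*M 4 2 + M 0 4*M 1 1*M 2 2*M 3 0*M 4 3 - M 0 4*M 1 1*M 2 2*M 3 3*M 4 0 - M 0 4*M 1 1*M 2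
      3*M 3 0*M 4 2 + M 0 4*M 1 1*M 2 3*M 3 2*M 4 0 + M 0 4*M 1 2*M 2 0*M 3 1*M 4 3 - M 0 4*M 1
      2*M 2 0*M 3 3*M 4 1 - M 0 4*M 1 2*M 2 1*M 3 0*M 4 3 + M 0 4*M 1 2*M 2 1*M 3 3*M 4 0 + M 0
      4*M 1 2*M 2 3*M 3 0*M 4 1 - M 0 4*M 1 2*M 2 3*M 3 1*M 4 0 - M 0 4*M 1 3*M 2 0*M 3 1*M 4 2
      + M 0 4*M 1 3*M 2 0*M 3 2*M 4 1 + M 0 4*M 1 3*M 2 1*M 3 0*M 4 2 - M 0 4*M 1 3*M 2 1*M 3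
      2*M 4 0 - M 0 4*M 1 3*M 2 2*M 3 0*M 4 1 + M 0 4*M 1 3*M 2 2*M 3 1*M 4 0 := by
  rw [Matrix.det_succ_row_zero]
  simp only [Fin.sum_univ_five, Matrix.submatrix_apply, det_fin_four', fsucc3_0, fsucc3_1, fsucc3_2, fsucc4_0, fsucc4_1, fsucc4_2, fsucc4_3, fsa4_0_0, fsa4_0_1, fsa4_0_2, fsa4_1_0, fsa4_1_1, fsa4_1_2, fsa4_2_0, fsa4_2_1, fsa4_2_2, fsa4_3_0, fsa4_3_1, fsa4_3_2, fsa5_0_0, fsa5_0_1, fsa5_0_2, fsa5_0_3, fsa5_1_0, fsa5_1_1, fsa5_1_2, fsa5_1_3, fsa5_2_0, fsa5_2_1, fsa5_2_2, fsa5_2_3, fsa5_3_0, fsa5_3_1, fsa5_3_2, fsa5_3_3, fsa5_4_0, fsa5_4_1, fsa5_4_2, fsa5_4_3, fv4_0, fv4_1, fv4_2, fv4_3, fv5_0, fv5_1, fv5_2, fv5_3, fv5_4]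
  ring


lemma E00 : matA3 0 0 = rhoW ^ 3 := by
  show rhoW ^ 3 = _
  rfl

lemma E01 : matA3 0 1 = -(3 * Hc * (rhoZ * rhoW ^ 2)) := by
  show Lbar (rhoW ^ 3) = _
  rw [L01]

lemma E02 : matA3 0 2 = Hc ^ 2 * (6 * rhoZ ^ 2 * rhoW - 3 * rhoW ^ 3) := by
  show Lbar (Lbar (rhoW ^ 3)) = _
  rw [L01, L02]

lemma E03 : matA3 0 3 = Hc ^ 3 * (21 * (rhoZ * rhoW ^ 2) - 6 * rhoZ ^ 3) := by
  show Lbar (Lbar (Lbar (rhoW ^ 3))) = _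
  rw [L01, L02, L03]

lemma E04 : matA3 0 4 = Hc ^ 4 * (21 * rhoW ^ 3 - 60 * (rhoZ ^ 2 * rhoW)) := by
  show Lbar (Lbar (Lbar (Lbar (rhoW ^ 3)))) = _
  rw [L01, L02, L03, L04]

lemma E10 : matA3 1 0 = rhoZ * rhoW ^ 2 := by
  show rhoZ * rhoW ^ 2 = _
  rfl

lemma E11 : matA3 1 1 = Hc * (rhoW ^ 3 - 2 * (rhoZ ^ 2 * rhoW)) := by
  show Lbar (rhoZ * rhoW ^ 2) = _
  rw [L11]

lemma E12 : matA3 1 2 = Hc ^ 2 * (2 * rhoZ ^ 3 - 7 * (rhoZ * rhoW ^ 2)) := by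
  show Lbar (Lbar (rhoZ * rhoW ^ 2)) = _
  rw [L11, L12]

lemma E13 : matA3 1 3 = Hc ^ 3 * (20 * (rhoZ ^ 2 * rhoW) - 7 * rhoW ^ 3) := by
  show Lbar (Lbar (Lbar (rhoZ * rhoW ^ 2))) = _
  rw [L11, L12, L13]

lemma E14 : matA3 1 4 = Hc ^ 4 * (61 * (rhoZ * rhoW ^ 2) - 20 * rhoZ ^ 3) := by
  show Lbar (Lbar (Lbar (Lbar (rhoZ * rhoW ^ 2)))) = _
  rw [L11, L12, L13, L14]

lemma E20 : matA3 2 0 = rhoZ ^ 2 * rhoW := by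
  show rhoZ ^ 2 * rhoW = _
  rfl

lemma E21 : matA3 2 1 = Hc * (2 * (rhoZ * rhoW ^ 2) - rhoZ ^ 3) := by
  show Lbar (rhoZ ^ 2 * rhoW) = _
  rw [L21]

lemma E22 : matA3 2 2 = Hc ^ 2 * (2 * rhoW ^ 3 - 7 * (rhoZ ^ 2 * rhoW)) := by
  show Lbar (Lbar (rhoZ ^ 2 * rhoW)) = _
  rw [L21, L22]

lemma E23 : matA3 2 3 = Hc ^ 3 * (7 * rhoZ ^ 3 - 20 * (rhoZ * rhoW ^ 2)) := by
  show Lbar (Lbar (Lbar (rhoZ ^ 2 * rhoW))) = _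
  rw [L21, L22, L23]

lemma E24 : matA3 2 4 = Hc ^ 4 * (61 * (rhoZ ^ 2 * rhoW) - 20 * rhoW ^ 3) := by
  show Lbar (Lbar (Lbar (Lbar (rhoZ ^ 2 * rhoW)))) = _
  rw [L21, L22, L23, L24]

lemma E30 : matA3 3 0 = rhoZ ^ 3 := by
  show rhoZ ^ 3 = _
  rfl

lemma E31 : matA3 3 1 = 3 * Hc * (rhoZ ^ 2 * rhoW) := by
  show Lbar (rhoZ ^ 3) = _
  rw [L31]

lemma E32 : matA3 3 2 = Hc ^ 2 * (6 * (rhoZ * rhoW ^ 2) - 3 * rhoZ ^ 3) := by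
  show Lbar (Lbar (rhoZ ^ 3)) = _
  rw [L31, L32]

lemma E33 : matA3 3 3 = Hc ^ 3 * (6 * rhoW ^ 3 - 21 * (rhoZ ^ 2 * rhoW)) := by
  show Lbar (Lbar (Lbar (rhoZ ^ 3))) = _
  rw [L31, L32, L33]

lemma E34 : matA3 3 4 = Hc ^ 4 * (21 * rhoZ ^ 3 - 60 * (rhoZ * rhoW ^ 2)) := by
  show Lbar (Lbar (Lbar (Lbar (rhoZ ^ 3)))) = _
  rw [L31, L32, L33, L34]

lemma E40 : matA3 4 0 = -(Hc * (rhoZ ^ 2 + rhoW ^ 2)) := by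
  show C (1 / 2 : ℂ) * rhoHat = _
  rw [C_half_eq, hRho]; ring

lemma E41 : matA3 4 1 = 0 := by
  show Lbar (C (1 / 2 : ℂ) * rhoHat) = _
  rw [L41]

lemma E42 : matA3 4 2 = 0 := by
  show Lbar (Lbar (C (1 / 2 : ℂ) * rhoHat)) = _
  rw [L41, Lbar_zero]

lemma E43 : matA3 4 3 = 0 := by
  show Lbar (Lbar (Lbar (C (1 / 2 : ℂ) * rhoHat))) = _
  rw [L41, Lbar_zero, Lbar_zero]

lemma E44 : matA3 4 4 = 0 := by
  show Lbar (Lbar (Lbar (Lbar (C (1 / 2 : ℂ) * rhoHat)))) = _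
  rw [L41, Lbar_zero, Lbar_zero, Lbar_zero]

set_option maxHeartbeats 1000000 in
/-- The determinant identity: det A₃ = −27·(1/2)⁹·(ρ̂_z² + ρ̂_w²)⁷. -/
lemma det_matA3 : matA3.det = -(108 * Hc ^ 11 * (rhoZ ^ 2 + rhoW ^ 2) ^ 7) := by
  rw [det_fin_five' matA3]
  simp only [E00, E01, E02, E03, E04, E10, E11, E12, E13, E14, E20, E21, E22, E23, E24, E30, E31, E32, E33, E34, E40, E41, E42, E43, E44]
  ring

/-- For every (z,w) ∈ ℂ² with (Im z)² + (Im w)² > 0, the evaluation of det A₃ at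
(z, w, z̄, w̄) is nonzero; by the Ebenfelt–Zaitsev characterization of umbilical points,
this says that each hypersurface M̃_ε = {(Im z)² + (Im w)² = ε²}, ε > 0, has no
umbilical points. -/
theorem statement8 (z w : ℂ) (h : 0 < z.im ^ 2 + w.im ^ 2) :
    eval (![z, w, starRingEnd ℂ z, starRingEnd ℂ w] : Fin 4 → ℂ) matA3.det ≠ 0 := by
  set f : Fin 4 → ℂ := ![z, w, starRingEnd ℂ z, starRingEnd ℂ w] with hf
  have h1 : eval f rhoZ = -(z.im * Complex.I) := by
    rw [hZ, Hc]
    simp only [map_neg, map_mul, eval_C, map_sub, eval_X, hf]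
    simp only [Matrix.cons_val_zero, Matrix.cons_val_two, Matrix.tail_cons, Matrix.head_cons]
    rw [Complex.sub_conj]
    push_cast
    ring
  have h2 : eval f rhoW = -(w.im * Complex.I) := by
    rw [hW, Hc]
    simp only [map_neg, map_mul, eval_C, map_sub, eval_X, hf]
    simp only [Matrix.cons_val_one, Matrix.head_cons, Matrix.cons_val_three, Matrix.tail_cons,
      Matrix.cons_val_zero]
    rw [Complex.sub_conj]
    push_cast
    ring
  have hH : eval f Hc = (2⁻¹ : ℂ) := by rw [Hc]; simp
  have key : eval f matA3.det
      = (27 / 512 : ℂ) * (((z.im : ℂ) ^ 2 + (w.im : ℂ) ^ 2)) ^ 7 := by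
    rw [det_matA3]
    simp only [map_neg, map_mul, map_pow, map_add, map_ofNat, h1, h2, hH]
    ring_nf
    rw [show Complex.I ^ 14 = -1 by
      rw [(by norm_num : (14 : ℕ) = 2 * 7), pow_mul, Complex.I_sq]; norm_num]
    ring
  rw [key]
  have hx : ((z.im : ℂ) ^ 2 + (w.im : ℂ) ^ 2) = ((z.im ^ 2 + w.im ^ 2 : ℝ) : ℂ) := by
    push_cast; ring
  rw [hx]
  refine mul_ne_zero (by norm_num) (pow_ne_zero _ ?_)
  exact Complex.ofReal_ne_zero.mpr h.ne'
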